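/- Let K be a compact convex region in ℝ² with boundary curve γ, let x ∈ interior(K), and suppose γ is a critical point of F(γ) = length(γ) − ∫∫_K B dx dy under homothety with center x: i.e., the derivative at p = 0 of F applied to the dilation of γ by factor (1+p) about x vanishes. If B ≤ B_max and the maximal distance from x to γ is d_max, then length(γ) ≤ length(γ)·d_max·B_max, hence d_max ≥ 1/B_max. -/

import Mathlib

/-!
Dilating `K` by `c = 1 + p` about `x` adds only points `x + s • (w - x)` with `w ∈ ∂K` and
`1 ≤ s ≤ c`. Cover `∂K` by pieces of diameter `δ ≤ p²` and total diameter `< ℓ + p`. In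
coordinates rotated so that some point `w₀` of a piece lies on the positive real axis seen from
`x`, the points swept out by that piece lie in a rectangle of sides `p·dmax + 2cδ` and `cδ`.
Hence `∫∫ B` grows by at most `Bmax·(p·dmax + o(p))·(ℓ + o(1))`; since criticality makes `ℓ`
the derivative of `∫∫ B` at `p = 0`, this gives `ℓ ≤ Bmax·dmax·ℓ`.
-/

open MeasureTheory Set Filter Topology
open scoped ENNReal

theorem IsPreconnected.inter_frontier_nonempty {X : Type*} [TopologicalSpace X] {s t : Set X}
    (hs : IsPreconnected s) (hst : (s ∩ t).Nonempty) (hsc : (s \ t).Nonempty) :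
    (s ∩ frontier t).Nonempty := by
  by_contra h
  have hcover : s ⊆ interior t ∪ (closure t)ᶜ := fun y hy => by
    by_cases hyc : y ∈ closure t
    · exact Or.inl (by_contra fun hyi => h ⟨y, hy, hyc, hyi⟩)
    · exact Or.inr hyc
  obtain ⟨y, -, hyi, hyc⟩ := hs _ _ isOpen_interior isClosed_closure.isOpen_compl hcover
    (hst.mono fun y (hy : y ∈ s ∩ t) =>
      ⟨hy.1, (hcover hy.1).resolve_right (not_not.2 (subset_closure hy.2))⟩)
    (hsc.mono fun y (hy : y ∈ s \ t) =>
      ⟨hy.1, (hcover hy.1).resolve_left fun hyi => hy.2 (interior_subset hyi)⟩)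
  exact hyc (interior_subset_closure hyi)

theorem MeasureTheory.Measure.exists_cover_tsum_ediam_rpow_lt_of_hausdorffMeasure_lt
    {X : Type*} [EMetricSpace X] [MeasurableSpace X] [BorelSpace X] {d : ℝ} {S : Set X}
    {a r : ℝ≥0∞} (hS : μH[d] S < a) (hr : 0 < r) :
    ∃ t : ℕ → Set X, S ⊆ ⋃ n, t n ∧ (∀ n, Metric.ediam (t n) ≤ r) ∧
      ∑' n, ⨆ _ : (t n).Nonempty, Metric.ediam (t n) ^ d < a := by
  rw [hausdorffMeasure_apply] at hS
  simpa only [iInf_lt_iff, exists_prop] using (le_iSup₂ (f := fun r (_ : 0 < r) =>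
    ⨅ (t : ℕ → Set X) (_ : S ⊆ ⋃ n, t n) (_ : ∀ n, Metric.ediam (t n) ≤ r),
      ∑' n, ⨆ _ : (t n).Nonempty, Metric.ediam (t n) ^ d) r hr).trans_lt hS

theorem MeasureTheory.setIntegral_sub_setIntegral_le {X : Type*} [MeasurableSpace X]
    {μ : Measure X} {f : X → ℝ} {s t : Set X} {C : ℝ} (hst : s ⊆ t) (hs : MeasurableSet s)
    (hf : IntegrableOn f t μ) (ht : μ t ≠ ∞) (hC : ∀ y, f y ≤ C) :
    ∫ y in t, f y ∂μ - ∫ y in s, f y ∂μ ≤ C * μ.real (t \ s) := by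
  rw [← setIntegral_sdiff hs hf hst]
  calc ∫ y in t \ s, f y ∂μ ≤ ∫ _ in t \ s, C ∂μ :=
        setIntegral_mono (hf.mono_set sdiff_subset)
          (integrableOn_const ((measure_mono sdiff_subset).trans_lt ht.lt_top).ne) hC
    _ = C * μ.real (t \ s) := by rw [setIntegral_const, smul_eq_mul, mul_comm]

theorem HasDerivAt.le_of_slope_le {g h : ℝ → ℝ} {g' a : ℝ} (hg : HasDerivAt g g' a)
    (hh : ContinuousAt h a) (hle : ∀ p > a, slope g a p ≤ h p) : g' ≤ h a :=
  le_of_tendsto_of_tendsto ((hasDerivAt_iff_tendsto_slope.1 hg).mono_left (nhdsGT_le_nhdsNE a))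
    (hh.tendsto.mono_left nhdsWithin_le_nhds) (eventually_nhdsWithin_of_forall hle)

theorem Real.exists_Icc_superset_of_dist_le {V : Set ℝ} (hV : V.Nonempty) {δ : ℝ}
    (h : ∀ a ∈ V, ∀ b ∈ V, dist a b ≤ δ) : ∃ m M, M - m ≤ δ ∧ V ⊆ Icc m M := by
  obtain ⟨a, ha⟩ := hV
  have hb : Bornology.IsBounded V := Metric.isBounded_iff.2 ⟨δ, h⟩
  refine ⟨sInf V, sSup V, ?_, hb.subset_Icc_sInf_sSup⟩
  rw [← Real.diam_eq hb]
  exact Metric.diam_le_of_forall_dist_le ((dist_self a).symm.trans_le (h a ha a ha)) h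

theorem Complex.volume_le_of_forall_rotate_mem_Icc (θ : Circle) (x : ℂ) {T : Set ℂ}
    {a b a' b' : ℝ}
    (hT : ∀ y ∈ T, (θ * (y - x)).re ∈ Icc a b ∧ (θ * (y - x)).im ∈ Icc a' b') :
    volume T ≤ ENNReal.ofReal (b - a) * ENNReal.ofReal (b' - a') := by
  have hφ : MeasurePreserving (fun z => rotation θ (z - x)) :=
    (rotation θ).measurePreserving.comp (measurePreserving_sub_right volume x)
  have hR : MeasurableSet (Icc a b ×ˢ Icc a' b') := measurableSet_Icc.prod measurableSet_Icc
  calc volume T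
      ≤ volume ((fun z => rotation θ (z - x)) ⁻¹'
          (measurableEquivRealProd ⁻¹' (Icc a b ×ˢ Icc a' b'))) := measure_mono hT
    _ = volume (Icc a b ×ˢ Icc a' b') := by
      rw [hφ.measure_preimage (hR.preimage measurableEquivRealProd.measurable).nullMeasurableSet,
        volume_preserving_equiv_real_prod.measure_preimage hR.nullMeasurableSet]
    _ = ENNReal.ofReal (b - a) * ENNReal.ofReal (b' - a') := by
      rw [Measure.volume_eq_prod, Measure.prod_prod, Real.volume_Icc, Real.volume_Icc]

section RadialShell

variable {E : Type*} [AddCommGroup E] [Module ℝ E]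

def radialShell (x : E) (S : Set E) (c : ℝ) : Set E :=
  ⋃ s ∈ Icc (1 : ℝ) c, AffineMap.homothety x s '' S

theorem radialShell_iUnion {ι : Type*} (x : E) (S : ι → Set E) (c : ℝ) :
    radialShell x (⋃ i, S i) c = ⋃ i, radialShell x (S i) c := by
  ext y
  simp only [radialShell, image_iUnion, mem_iUnion]
  tauto

@[simp]
theorem radialShell_empty (x : E) (c : ℝ) : radialShell x ∅ c = ∅ := by
  simp [radialShell]

theorem image_homothety_diff_subset_radialShell [TopologicalSpace E] [ContinuousAdd E]
    [ContinuousSMul ℝ E] (x : E) (K : Set E) {c : ℝ} (hc : 1 ≤ c) :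
    AffineMap.homothety x c '' K \ K ⊆ radialShell x (frontier K) c := by
  rintro _ ⟨⟨z, hzK, rfl⟩, hyK⟩
  set γ : ℝ → E := fun s => AffineMap.homothety x s z
  have hγ : Continuous γ := by simp only [γ, AffineMap.homothety_apply]; fun_prop
  obtain ⟨_, ⟨s, ⟨hs1, hsc⟩, rfl⟩, hγs⟩ :=
    (isPreconnected_Icc.image γ hγ.continuousOn).inter_frontier_nonempty
      ⟨z, ⟨1, ⟨le_rfl, hc⟩, by simp [γ]⟩, hzK⟩ ⟨_, ⟨c, ⟨hc, le_rfl⟩, rfl⟩, hyK⟩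
  have hs0 : 0 < s := by linarith
  refine mem_biUnion (x := c / s) ⟨(one_le_div hs0).2 hsc, div_le_self (by linarith) hs1⟩
    ⟨γ s, hγs, ?_⟩
  simp only [γ, ← AffineMap.homothety_mul_apply, div_mul_cancel₀ _ hs0.ne']

end RadialShell

theorem volume_radialShell_le (x : ℂ) {S : Set ℂ} {c δ D : ℝ} (hc : 1 ≤ c)
    (hS : ∀ w ∈ S, ∀ w' ∈ S, dist w w' ≤ δ) (hD : ∀ w ∈ S, dist x w ≤ D) :
    volume (radialShell x S c) ≤
      ENNReal.ofReal ((c - 1) * D + 2 * c * δ) * ENNReal.ofReal (c * δ) := by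
  rcases S.eq_empty_or_nonempty with rfl | ⟨w₀, hw₀⟩
  · simp
  -- rotate `w₀ - x` onto the positive real axis
  set θ := Circle.exp (-Complex.arg (w₀ - x))
  set v : ℂ → ℂ := fun w => θ * (w - x)
  have hv₀ : v w₀ = ‖w₀ - x‖ := by
    change (θ : ℂ) * (w₀ - x) = _
    conv_lhs => rw [← Complex.norm_mul_exp_arg_mul_I (w₀ - x)]
    simp only [θ, Circle.coe_exp, mul_left_comm _ (‖w₀ - x‖ : ℂ), ← Complex.exp_add]
    simp
  have hvd : ∀ w w', ‖v w - v w'‖ = dist w w' := fun w w' => by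
    simp [v, ← mul_sub, dist_eq_norm, Circle.norm_coe]
  obtain ⟨m, M, hMm, hmM⟩ :=
    Real.exists_Icc_superset_of_dist_le (V := (fun w => (v w).im) '' S) (δ := δ)
      ⟨_, w₀, hw₀, rfl⟩ (by
        rintro _ ⟨w, hw, rfl⟩ _ ⟨w', hw', rfl⟩
        rw [Real.dist_eq, ← Complex.sub_im]
        exact (Complex.abs_im_le_norm _).trans ((hvd w w').trans_le (hS w hw w' hw')))
  have hm₀ : m ≤ 0 ∧ 0 ≤ M := by simpa [hv₀] using hmM ⟨w₀, hw₀, rfl⟩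
  have hu : ‖w₀ - x‖ ≤ D := by simpa [dist_eq_norm'] using hD w₀ hw₀
  have hδ : 0 ≤ δ := (dist_self w₀).symm.trans_le (hS w₀ hw₀ w₀ hw₀)
  refine (Complex.volume_le_of_forall_rotate_mem_Icc θ x
    (a := ‖w₀ - x‖ - c * δ) (b := ‖w₀ - x‖ + (c - 1) * D + c * δ) (a' := c * m) (b' := c * M)
    ?_).trans ?_
  · simp only [radialShell, mem_iUnion₂]
    rintro _ ⟨s, ⟨hs1, hsc⟩, w, hw, rfl⟩
    have hsv : θ * (AffineMap.homothety x s w - x) = s * v w := by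
      simp [v, AffineMap.homothety_apply]; ring
    have hre := abs_le.1
      ((Complex.abs_re_le_norm _).trans ((hvd w w₀).trans_le (hS w hw w₀ hw₀)))
    have him := hmM ⟨w, hw, rfl⟩
    rw [Complex.sub_re, hv₀, Complex.ofReal_re] at hre
    simp only [hsv, Complex.re_ofReal_mul, Complex.im_ofReal_mul, mem_Icc] at him ⊢
    refine ⟨⟨?_, ?_⟩, ?_, ?_⟩ <;> nlinarith [him.1, him.2, hre.1, hre.2, norm_nonneg (w₀ - x)]
  · gcongr
    · exact le_of_eq (by ring)
    · nlinarith

theorem volume_radialShell_le_of_hausdorffMeasure_lt (x : ℂ) {S : Set ℂ} {c D r : ℝ}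
    {a : ℝ≥0∞} (hc : 1 ≤ c) (hD : ∀ w ∈ S, dist x w ≤ D) (hr : 0 < r) (hS : μH[1] S < a) :
    volume (radialShell x S c) ≤
      ENNReal.ofReal ((c - 1) * D + 2 * c * r) * ENNReal.ofReal c * a := by
  obtain ⟨t, hcov, hmesh, hsum⟩ :=
    Measure.exists_cover_tsum_ediam_rpow_lt_of_hausdorffMeasure_lt hS (ENNReal.ofReal_pos.2 hr)
  simp only [ENNReal.rpow_one] at hsum
  have hpiece : ∀ n, volume (radialShell x (t n ∩ S) c) ≤
      ENNReal.ofReal ((c - 1) * D + 2 * c * r) * ENNReal.ofReal c *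
        ⨆ _ : (t n).Nonempty, Metric.ediam (t n) := fun n => by
    rcases (t n ∩ S).eq_empty_or_nonempty with he | hne
    · simp [he]
    have hfin : Metric.ediam (t n) ≠ ∞ := ne_top_of_le_ne_top ENNReal.ofReal_ne_top (hmesh n)
    have hδ : ∀ w ∈ t n ∩ S, ∀ w' ∈ t n ∩ S, dist w w' ≤ (Metric.ediam (t n)).toReal :=
      fun w hw w' hw' => by
        rw [dist_edist]
        exact ENNReal.toReal_mono hfin (Metric.edist_le_ediam_of_mem hw.1 hw'.1)
    refine (volume_radialShell_le x hc hδ fun w hw => hD w hw.2).trans ?_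
    rw [iSup_pos (hne.mono inter_subset_left), ENNReal.ofReal_mul (by linarith), ← mul_assoc,
      ENNReal.ofReal_toReal hfin]
    gcongr
    exact ENNReal.toReal_le_of_le_ofReal hr.le (hmesh n)
  calc volume (radialShell x S c)
      = volume (⋃ n, radialShell x (t n ∩ S) c) := by
        rw [← radialShell_iUnion, ← iUnion_inter, inter_eq_right.2 hcov]
    _ ≤ ∑' n, volume (radialShell x (t n ∩ S) c) := measure_iUnion_le _
    _ ≤ ∑' n, ENNReal.ofReal ((c - 1) * D + 2 * c * r) * ENNReal.ofReal c *
          ⨆ _ : (t n).Nonempty, Metric.ediam (t n) := ENNReal.tsum_le_tsum hpiece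
    _ ≤ _ := by rw [ENNReal.tsum_mul_left]; gcongr

theorem setIntegral_image_homothety_sub_le {K : Set ℂ} (hcomp : IsCompact K)
    (hconv : Convex ℝ K) {x : ℂ} (hx : x ∈ interior K) {B : ℂ → ℝ} (hBc : Continuous B)
    {Bmax c D r a : ℝ} (hB : ∀ y, B y ≤ Bmax) (hBmax : 0 ≤ Bmax) (hc : 1 < c)
    (hD : ∀ w ∈ frontier K, dist x w ≤ D) (hD₀ : 0 ≤ D) (hr : 0 < r)
    (ha : μH[1] (frontier K) < ENNReal.ofReal a) :
    (∫ y in AffineMap.homothety x c '' K, B y) - ∫ y in K, B y ≤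
      Bmax * (((c - 1) * D + 2 * c * r) * c * a) := by
  set A := (AffineMap.homothety x c : ℂ →ᵃ[ℝ] ℂ) '' K
  have hKA : K ⊆ A :=
    (hconv.subset_interior_image_homothety_of_one_lt hx c hc).trans interior_subset
  have hA : IsCompact A := hcomp.image (AffineMap.homothety_continuous _ _)
  have ha₀ : 0 < a := ENNReal.ofReal_pos.1 (pos_of_gt ha)
  have hvol := (measure_mono (image_homothety_diff_subset_radialShell x K hc.le)).trans
    (volume_radialShell_le_of_hausdorffMeasure_lt x hc.le hD hr ha)
  have hX : 0 ≤ (c - 1) * D + 2 * c * r := by nlinarith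
  rw [← ENNReal.ofReal_mul hX, ← ENNReal.ofReal_mul (by positivity)] at hvol
  calc (∫ y in A, B y) - ∫ y in K, B y ≤ Bmax * volume.real (A \ K) :=
        setIntegral_sub_setIntegral_le (μ := volume) hKA hcomp.measurableSet
          (hBc.continuousOn.integrableOn_compact hA) hA.measure_lt_top.ne hB
    _ ≤ _ := by gcongr; exact ENNReal.toReal_le_of_le_ofReal (by positivity) hvol

/-- Let `K` be a compact convex planar region with boundary `γ = frontier K` of positive
length `ℓ`, let `x` be an interior point, and suppose `γ` is a critical point of
`F = length − ∫∫ B` under homothety about `x` (the derivative at `p = 0` of `F` applied to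
the dilation by factor `1 + p` vanishes).  If `0 < B ≤ Bmax` and `dmax` is the maximal
distance from `x` to `γ`, then `ℓ ≤ ℓ·dmax·Bmax`, hence `dmax ≥ 1/Bmax`. -/
theorem dmax_ge_of_homothety_critical (K : Set ℂ) (hcomp : IsCompact K)
    (hconv : Convex ℝ K) (x : ℂ) (hx : x ∈ interior K)
    (B : ℂ → ℝ) (hBc : Continuous B) (Bmax : ℝ)
    (hB : ∀ p, 0 < B p ∧ B p ≤ Bmax)
    (ℓ dmax : ℝ) (hℓ : ℓ = (μH[1] (frontier K)).toReal) (hℓpos : 0 < ℓ)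
    (hd : IsGreatest ((fun y => dist x y) '' frontier K) dmax)
    (hcrit : HasDerivAt
      (fun p : ℝ => (1 + p) * ℓ - ∫ y in (AffineMap.homothety x (1 + p) : ℂ →ᵃ[ℝ] ℂ) '' K, B y)
      0 0) :
    ℓ ≤ ℓ * dmax * Bmax ∧ 1 / Bmax ≤ dmax := by
  have hBmax : 0 < Bmax := (hB 0).1.trans_le (hB 0).2
  have hdmax : 0 ≤ dmax := by obtain ⟨w, -, rfl⟩ := hd.1; exact dist_nonneg
  have hμ : μH[1] (frontier K) = ENNReal.ofReal ℓ := by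
    rw [hℓ, ENNReal.ofReal_toReal (ENNReal.toReal_pos_iff.1 (hℓ ▸ hℓpos)).2.ne]
  set g : ℝ → ℝ := fun p => ∫ y in AffineMap.homothety x (1 + p) '' K, B y
  have hg : HasDerivAt g ℓ 0 :=
    ((((hasDerivAt_id (0 : ℝ)).const_add 1).mul_const ℓ).sub hcrit).congr_deriv (by ring)
      |>.congr_of_eventuallyEq (.of_forall fun p => by simp only [g, id, Pi.sub_apply]; ring)
  have hslope (p : ℝ) (hp : 0 < p) :
      slope g 0 p ≤ Bmax * ((dmax + 2 * (1 + p) * p) * (1 + p) * (ℓ + p)) := by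
    have hg0 : g 0 = ∫ y in K, B y := by simp [g]
    rw [slope_def_field, sub_zero, div_le_iff₀ hp, hg0]
    calc g p - ∫ y in K, B y
        ≤ Bmax * (((1 + p - 1) * dmax + 2 * (1 + p) * (p * p)) * (1 + p) * (ℓ + p)) :=
          setIntegral_image_homothety_sub_le (c := 1 + p) (r := p * p) (a := ℓ + p) hcomp hconv
            hx hBc (fun y => (hB y).2) hBmax.le (by linarith) (fun w hw => hd.2 ⟨w, hw, rfl⟩)
            hdmax (by positivity)
            (hμ.trans_lt ((ENNReal.ofReal_lt_ofReal_iff (by linarith)).2 (by linarith)))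
      _ = _ := by ring
  have hlim := hg.le_of_slope_le (by fun_prop) hslope
  norm_num at hlim
  refine ⟨by linarith, ?_⟩
  rw [div_le_iff₀ hBmax]
  nlinarith
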